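/- arXiv:1212.4890 — 4 statements merged into one kernel-verified Lean document; each statement's English description precedes it below -/
import Mathlib

section
/- Let n ≥ 2, x : ℤ → ℝ, and let t′ satisfy t* < t′ < t* + n − 1. Let ε > 0 and suppose x_{t′} = x_{t*} − ε (the log return from t* to t′ is −ε). If x_t > x_{t*} − ε for every t with t′ − n + 1 ≤ t < t*, and x_t ≥ x_{t*} − ε for every t with t* ≤ t ≤ t′, then mave_{t′} > x_{t*} − ε. -/
/-!
Since `t′ < t* + n − 1`, the window ending at `t′` reaches back before `t*`. Every entry of
that window is at least `x t* − ε`, and its oldest entry `x (t′ − n + 1)`, a pre-entry value,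
exceeds it strictly; so the average does too.
-/

/-- The `n`-period moving average of a sequence `x : ℤ → ℝ` at time `t`:
`mave n x t = (1/n) · ∑_{i=0}^{n−1} x (t − i)`. -/
noncomputable def mave (n : ℕ) (x : ℤ → ℝ) (t : ℤ) : ℝ :=
  (∑ i ∈ Finset.range n, x (t - (i : ℤ))) / n

open Finset

theorem lt_mave_of_forall_le_of_exists_lt {n : ℕ} {x : ℤ → ℝ} {t : ℤ} {c : ℝ}
    (hle : ∀ i < n, c ≤ x (t - i)) (hlt : ∃ i < n, c < x (t - i)) : c < mave n x t := by
  obtain ⟨j, hj, hcj⟩ := hlt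
  have hn : (0 : ℝ) < n := by exact_mod_cast j.zero_le.trans_lt hj
  have hsum : ∑ _i ∈ range n, c < ∑ i ∈ range n, x (t - i) :=
    sum_lt_sum (fun i hi => hle i (mem_range.1 hi)) ⟨j, mem_range.2 hj, hcj⟩
  rw [mave, lt_div_iff₀ hn]
  simpa [mul_comm] using hsum

theorem mave_lower_bound_intermediate_general
    (n : ℕ) (hn : 2 ≤ n) (x : ℤ → ℝ) (tstar t' : ℤ)
    (h2 : t' < tstar + (n : ℤ) - 1)
    (ε : ℝ)
    (hpre : ∀ t : ℤ, t' - (n : ℤ) + 1 ≤ t → t < tstar → x tstar - ε < x t)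
    (hpost : ∀ t : ℤ, tstar ≤ t → t ≤ t' → x tstar - ε ≤ x t) :
    x tstar - ε < mave n x t' := by
  apply lt_mave_of_forall_le_of_exists_lt
  · intro i hi
    rcases lt_or_ge (t' - i) tstar with h | h
    · exact (hpre _ (by omega) h).le
    · exact hpost _ h (by omega)
  · exact ⟨n - 1, by omega, hpre _ (by omega) (by omega)⟩

/-- Lemma 4: the lower bound of Lemma 3 extended to an intermediate time
`t* < t′ < t* + n − 1`.  If the log return from `t*` to `t′` is `−ε` (`ε > 0`),
the pre-entry values lying inside the window ending at `t′` satisfy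
`x t > x t* − ε`, and the values on `[t*, t′]` satisfy `x t ≥ x t* − ε`,
then `mave t′ > x t* − ε`. -/
theorem mave_lower_bound_intermediate
    (n : ℕ) (hn : 2 ≤ n) (x : ℤ → ℝ) (tstar t' : ℤ)
    (h1 : tstar < t') (h2 : t' < tstar + (n : ℤ) - 1)
    (ε : ℝ) (hε : 0 < ε)
    (hret : x t' = x tstar - ε)
    (hpre : ∀ t : ℤ, t' - (n : ℤ) + 1 ≤ t → t < tstar → x tstar - ε < x t)
    (hpost : ∀ t : ℤ, tstar ≤ t → t ≤ t' → x tstar - ε ≤ x t) :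
    x tstar - ε < mave n x t' :=
  mave_lower_bound_intermediate_general n hn x tstar t' h2 ε hpre hpost
end

section
/- Let n ≥ 2, x : ℤ → ℝ, and let t′ satisfy t* < t′ < t* + n − 1. Let ε > 0 and suppose x_{t′} = x_{t*} + ε (the log return from t* to t′ is +ε). If x_t < x_{t*} + ε for every t with t′ − n + 1 ≤ t < t*, and x_t ≤ x_{t*} + ε for every t with t* ≤ t < t′, then mave_{t′} < x_{t*} + ε. -/
/-- Lemma 6: the upper bound of Lemma 5 extended to an intermediate time
`t* < t′ < t* + n − 1`.  If the log return from `t*` to `t′` is `+ε` (`ε > 0`),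
the pre-entry values lying inside the window ending at `t′` satisfy
`x t < x t* + ε`, and the values on `[t*, t′)` satisfy `x t ≤ x t* + ε`,
then `mave t′ < x t* + ε`. -/
theorem mave_upper_bound_intermediate
    (n : ℕ) (hn : 2 ≤ n) (x : ℤ → ℝ) (tstar t' : ℤ)
    (h1 : tstar < t') (h2 : t' < tstar + (n : ℤ) - 1)
    (ε : ℝ) (hε : 0 < ε)
    (hret : x t' = x tstar + ε)
    (hpre : ∀ t : ℤ, t' - (n : ℤ) + 1 ≤ t → t < tstar → x t < x tstar + ε)
    (hpost : ∀ t : ℤ, tstar ≤ t → t < t' → x t ≤ x tstar + ε) :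
    mave n x t' < x tstar + ε := by
  have hnpos : (0:ℝ) < n := by positivity
  have hle : ∀ i ∈ Finset.range n, x (t' - (i:ℤ)) ≤ x tstar + ε := by
    intro i hi
    simp only [Finset.mem_range] at hi
    rcases lt_trichotomy (t' - (i:ℤ)) tstar with h | h | h
    · exact le_of_lt (hpre _ (by omega) h)
    · rw [h]; linarith
    · rcases eq_or_lt_of_le (show t' - (i:ℤ) ≤ t' by omega) with he | hlt
      · rw [he, hret]
      · exact hpost _ (le_of_lt h) hlt
  have hstrict : ∃ i ∈ Finset.range n, x (t' - (i:ℤ)) < x tstar + ε := by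
    refine ⟨n - 1, Finset.mem_range.mpr (by omega), ?_⟩
    have hc : ((n - 1 : ℕ) : ℤ) = (n:ℤ) - 1 := by
      have : 1 ≤ n := by omega
      push_cast [this]; ring
    apply hpre
    · omega
    · omega
  have hsum : (∑ i ∈ Finset.range n, x (t' - (i:ℤ))) < n * (x tstar + ε) := by
    calc (∑ i ∈ Finset.range n, x (t' - (i:ℤ)))
        < ∑ _i ∈ Finset.range n, (x tstar + ε) := by
          obtain ⟨j, hj, hjs⟩ := hstrict
          exact Finset.sum_lt_sum hle ⟨j, hj, hjs⟩
      _ = n * (x tstar + ε) := by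
          rw [Finset.sum_const, Finset.card_range, nsmul_eq_mul]
  rw [mave, div_lt_iff₀ hnpos]
  linarith
end

section
/- The maximum possible log return of a Bollinger Band long trade is strictly less than the gap at entry between the moving average and the log price ratio. Precisely: let n ≥ 2, x : ℤ → ℝ, and suppose a long trade is entered at t* with x_{t*} < mave_{t*}. Suppose the trade exits at time t′ > t* by an exact crossing of the moving average (x_{t′} = mave_{t′}), and that x_s < mave_{t*} for every s with t′ − n + 1 ≤ s ≤ t′ − 1. Then x_{t′} < mave_{t*}, and hence the log return satisfies x_{t′} − x_{t*} < mave_{t*} − x_{t*}. -/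
open Finset

theorem lt_of_eq_sum_div_card_of_forall_erase_lt {ι K : Type*} [DecidableEq ι] [Field K]
    [LinearOrder K] [IsStrictOrderedRing K] {s : Finset ι} {f : ι → K} {a : ι} {c : K}
    (ha : a ∈ s) (hs : (s.erase a).Nonempty) (hmean : f a = (∑ i ∈ s, f i) / #s)
    (hlt : ∀ i ∈ s.erase a, f i < c) : f a < c := by
  by_contra! hca
  have hcard : (#s : K) = #(s.erase a) + 1 := by
    rw [← card_erase_add_one ha, Nat.cast_succ]
  have hsum : ∑ i ∈ s, f i = #s * f a := by
    rw [hmean, mul_div_cancel₀ _ (by rw [hcard]; positivity)]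
  have hrest : ∑ i ∈ s.erase a, f i < #(s.erase a) * f a :=
    calc ∑ i ∈ s.erase a, f i < ∑ _i ∈ s.erase a, c := sum_lt_sum_of_nonempty hs hlt
      _ = #(s.erase a) * c := by rw [sum_const, nsmul_eq_mul]
      _ ≤ #(s.erase a) * f a := mul_le_mul_of_nonneg_left hca (Nat.cast_nonneg _)
  have hsplit := add_sum_erase s f ha
  rw [hsum, hcard] at hsplit
  linarith

theorem lt_of_eq_mave {n : ℕ} {x : ℤ → ℝ} {t : ℤ} {c : ℝ} (hn : 2 ≤ n)
    (hcross : x t = mave n x t) (hwindow : ∀ s : ℤ, t - n + 1 ≤ s → s ≤ t - 1 → x s < c) :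
    x t < c := by
  have hmean : x (t - ((0 : ℕ) : ℤ)) = (∑ i ∈ range n, x (t - (i : ℤ))) / #(range n) := by
    rw [card_range, ← mave]; simpa using hcross
  have hothers : ∀ i ∈ (range n).erase 0, x (t - (i : ℕ)) < c := by
    intro i hi
    obtain ⟨hi0, hin⟩ := mem_erase.1 hi
    have := mem_range.1 hin
    exact hwindow _ (by omega) (by omega)
  simpa using lt_of_eq_sum_div_card_of_forall_erase_lt (f := fun i : ℕ ↦ x (t - i))
    (mem_range.2 (by omega)) ⟨1, mem_erase.2 ⟨one_ne_zero, mem_range.2 (by omega)⟩⟩ hmean hothers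

theorem bollinger_return_lt_entry_gap_general
    (n : ℕ) (hn : 2 ≤ n) (x : ℤ → ℝ) (tstar t' : ℤ)
    (hexit : x t' = mave n x t')
    (hbelow : ∀ s : ℤ, t' - (n : ℤ) + 1 ≤ s → s ≤ t' - 1 → x s < mave n x tstar) :
    x t' < mave n x tstar ∧ x t' - x tstar < mave n x tstar - x tstar := by
  have hexit_below := lt_of_eq_mave hn hexit hbelow
  exact ⟨hexit_below, sub_lt_sub_right hexit_below _⟩

/-- Lemma 7: the maximum possible log return of a Bollinger Band long trade is
strictly less than the gap at entry between the moving average and the log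
price ratio.  If a long trade entered at `t*` (with `x t* < mave t*`) exits at
`t′ > t*` by an exact crossing `x t′ = mave t′`, and all the other values in
the window ending at `t′` lie strictly below `mave t*`, then `x t′ < mave t*`,
so the log return satisfies `x t′ − x t* < mave t* − x t*`. -/
theorem bollinger_return_lt_entry_gap
    (n : ℕ) (hn : 2 ≤ n) (x : ℤ → ℝ) (tstar t' : ℤ)
    (hentry : x tstar < mave n x tstar)
    (hlt : tstar < t')
    (hexit : x t' = mave n x t')
    (hbelow : ∀ s : ℤ, t' - (n : ℤ) + 1 ≤ s → s ≤ t' - 1 → x s < mave n x tstar) :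
    x t' < mave n x tstar ∧ x t' - x tstar < mave n x tstar - x tstar :=
  bollinger_return_lt_entry_gap_general n hn x tstar t' hexit hbelow
end

section
/- Let n ≥ 2, x : ℤ → ℝ, t** = t* + n − 1, c ∈ ℝ, and ε > 0. Suppose x_t = c for every t with t* ≤ t ≤ t** − 1. Then: (i) if x_{t**} = c + ε (an overall positive log return of +ε over the window), then x_{t**} > mave_{t**}, so the Bollinger Band exit condition x_t ≥ mave_t is triggered at t = t**; and (ii) if x_{t**} = c − ε (an overall negative log return of −ε over the window), then x_{t**} < mave_{t**}, so the exit condition is not triggered at t = t**. -/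
/-- Lemma 8 (the two extreme scenarios): suppose `x t = c` for
`t* ≤ t ≤ t** − 1` where `t** = t* + n − 1`.  Then (i) if `x t** = c + ε`
(overall log return `+ε > 0` over the window), the Bollinger Band exit
condition `x t ≥ mave t` is triggered at `t = t**`; and (ii) if `x t** = c − ε`
(overall log return `−ε < 0`), the exit condition is not triggered at `t = t**`. -/
theorem bollinger_exit_iff_nonneg_extreme_scenarios
    (n : ℕ) (hn : 2 ≤ n) (x : ℤ → ℝ) (tstar : ℤ) (c ε : ℝ) (hε : 0 < ε)
    (hconst : ∀ t : ℤ, tstar ≤ t → t ≤ tstar + (n : ℤ) - 2 → x t = c) :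
    (x (tstar + (n : ℤ) - 1) = c + ε →
      mave n x (tstar + (n : ℤ) - 1) < x (tstar + (n : ℤ) - 1)) ∧
    (x (tstar + (n : ℤ) - 1) = c - ε →
      x (tstar + (n : ℤ) - 1) < mave n x (tstar + (n : ℤ) - 1)) := by
  obtain ⟨k, rfl⟩ : ∃ k, n = k + 1 := ⟨n - 1, by omega⟩
  have hk : 1 ≤ k := by omega
  set T : ℤ := tstar + ((k + 1 : ℕ) : ℤ) - 1 with hT
  have hsum : ∑ i ∈ Finset.range (k + 1), x (T - (i : ℤ)) = x T + k * c := by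
    rw [Finset.sum_range_succ']
    have h0 : ∀ i ∈ Finset.range k, x (T - ((i : ℕ) + 1 : ℤ)) = c := by
      intro i hi
      simp only [Finset.mem_range] at hi
      apply hconst <;> push_cast [hT] <;> omega
    rw [Finset.sum_congr rfl (fun i hi => by
      have := h0 i hi; push_cast; push_cast at this; linarith)]
    simp [Finset.sum_const, add_comm]
  have hmave : mave (k + 1) x T = (x T + k * c) / (k + 1) := by
    rw [mave, hsum]; push_cast; ring_nf
  have hnpos : (0 : ℝ) < (k : ℝ) + 1 := by positivity
  have hkpos : (0 : ℝ) < (k : ℝ) := by exact_mod_cast hk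
  constructor
  · intro hx
    rw [hmave, hx, div_lt_iff₀ hnpos]
    nlinarith
  · intro hx
    rw [hmave, hx, lt_div_iff₀ hnpos]
    nlinarith
end
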